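/- Let G be a connected non-complete 2K2-free simple graph and let S be a minimal vertex separator of G. Then G − S has at least one trivial component, i.e., at least one connected component of G − S consists of a single vertex. -/

import Mathlib

/-! Two non-trivial components of a graph would contain two edges with no edge between
them, i.e. an induced `2K₂`. Since `2K₂`-freeness passes to induced subgraphs, the
disconnected graph `G − S` has at most one non-trivial component, hence a trivial one. -/

open SimpleGraph

/-- A simple graph is `2K₂`-free: there are no four pairwise distinct vertices `a b c d`
with `ab` and `cd` edges and none of `ac, ad, bc, bd` an edge. -/
def TwoK2Free {V : Type*} (G : SimpleGraph V) : Prop :=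
  ¬ ∃ a b c d : V, a ≠ b ∧ a ≠ c ∧ a ≠ d ∧ b ≠ c ∧ b ≠ d ∧ c ≠ d ∧
    G.Adj a b ∧ G.Adj c d ∧ ¬ G.Adj a c ∧ ¬ G.Adj a d ∧ ¬ G.Adj b c ∧ ¬ G.Adj b d

/-- `S ⊊ V(G)` is a vertex separator: deleting `S` leaves a disconnected graph. -/
def IsSeparator {V : Type*} (G : SimpleGraph V) (S : Set V) : Prop :=
  S ≠ Set.univ ∧ ¬ (G.induce (Sᶜ : Set V)).Connected

/-- A minimal vertex separator: no proper subset is a separator. -/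
def IsMinSeparator {V : Type*} (G : SimpleGraph V) (S : Set V) : Prop :=
  IsSeparator G S ∧ ∀ S' : Set V, S' ⊂ S → ¬ IsSeparator G S'

/-- A connected component is trivial if its support is a single vertex. -/
def IsTrivialComp {α : Type*} {H : SimpleGraph α} (C : H.ConnectedComponent) : Prop :=
  ∃ v, C.supp = {v}

section

variable {V W : Type*} {G : SimpleGraph V} {H : SimpleGraph W}

theorem isTrivialComp_of_isIsolated {v : V} (hv : G.IsIsolated v) :
    IsTrivialComp (G.connectedComponentMk v) := by
  refine ⟨v, Set.eq_singleton_iff_unique_mem.mpr ⟨rfl, fun w hw => ?_⟩⟩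
  obtain ⟨p⟩ := ConnectedComponent.exact hw
  by_contra hwv
  exact hv _ (p.reverse.adj_snd (Walk.not_nil_of_ne (Ne.symm hwv)))

theorem TwoK2Free.of_embedding (hG : TwoK2Free G) (f : H ↪g G) : TwoK2Free H := by
  rintro ⟨a, b, c, d, hab, hac, had, hbc, hbd, hcd, hadjab, hadjcd, hnac, hnad, hnbc, hnbd⟩
  exact hG ⟨f a, f b, f c, f d, f.injective.ne hab, f.injective.ne hac, f.injective.ne had,
    f.injective.ne hbc, f.injective.ne hbd, f.injective.ne hcd, f.map_adj_iff.mpr hadjab,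
    f.map_adj_iff.mpr hadjcd, mt f.map_adj_iff.mp hnac, mt f.map_adj_iff.mp hnad,
    mt f.map_adj_iff.mp hnbc, mt f.map_adj_iff.mp hnbd⟩

theorem TwoK2Free.induce (hG : TwoK2Free G) (s : Set V) : TwoK2Free (G.induce s) :=
  hG.of_embedding (Embedding.induce s)

theorem TwoK2Free.reachable_of_adj_of_adj (hG : TwoK2Free G) {x a y b : V}
    (hxa : G.Adj x a) (hyb : G.Adj y b) : G.Reachable x y := by
  by_contra hxy
  have hxb : ¬ G.Reachable x b := fun h => hxy (h.trans hyb.reachable.symm)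
  have hay : ¬ G.Reachable a y := fun h => hxy (hxa.reachable.trans h)
  have hab : ¬ G.Reachable a b := fun h => hxb (hxa.reachable.trans h)
  exact hG ⟨x, a, y, b, hxa.ne, fun h => hxy (h ▸ .rfl), fun h => hxb (h ▸ .rfl),
    fun h => hay (h ▸ .rfl), fun h => hab (h ▸ .rfl), hyb.ne, hxa, hyb,
    fun h => hxy h.reachable, fun h => hxb h.reachable, fun h => hay h.reachable,
    fun h => hab h.reachable⟩

theorem TwoK2Free.exists_isTrivialComp_of_not_preconnected (hG : TwoK2Free G)
    (hdisc : ¬ G.Preconnected) : ∃ C : G.ConnectedComponent, IsTrivialComp C := by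
  obtain ⟨x, y, hxy⟩ : ∃ x y : V, ¬ G.Reachable x y := by
    simpa only [Preconnected, not_forall] using hdisc
  by_cases hx : G.IsIsolated x
  · exact ⟨_, isTrivialComp_of_isIsolated hx⟩
  by_cases hy : G.IsIsolated y
  · exact ⟨_, isTrivialComp_of_isIsolated hy⟩
  obtain ⟨a, hxa⟩ := exists_adj_iff_not_isIsolated.mpr hx
  obtain ⟨b, hyb⟩ := exists_adj_iff_not_isIsolated.mpr hy
  exact absurd (hG.reachable_of_adj_of_adj hxa hyb) hxy

end

theorem exists_trivial_component {V : Type*} (G : SimpleGraph V)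
    (h2k2 : TwoK2Free G) (S : Set V) (hS : IsMinSeparator G S) :
    ∃ C : (G.induce (Sᶜ : Set V)).ConnectedComponent, IsTrivialComp C := by
  obtain ⟨⟨hSne, hdisc⟩, -⟩ := hS
  have : Nonempty (Sᶜ : Set V) := (Set.nonempty_compl.mpr hSne).to_subtype
  exact (h2k2.induce Sᶜ).exists_isTrivialComp_of_not_preconnected fun hpre => hdisc ⟨hpre⟩
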